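/- arXiv:1211.3320 — 3 statements merged into one kernel-verified Lean document; each statement's English description precedes it below -/
import Mathlib

section
/- Let α, β > 0, q₀, q₁ ∈ [1, ∞], θ = α/(α+β) ∈ (0,1) and 1/p = (1-θ)/q₀ + θ/q₁. There exists a constant C such that for every sequence (g_j)_{j∈ℤ} of measurable functions on ℝⁿ and every measurable f such that Σ_{j∈ℤ} g_j(x) converges absolutely to f(x) for a.e. x: ‖f‖_{L^p} ≤ C · ‖ sup_{j∈ℤ} 2^{jα}|g_j| ‖_{L^{q₀}}^{1-θ} · ‖ sup_{j∈ℤ} 2^{-jβ}|g_j| ‖_{L^{q₁}}^{θ}. -/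
open MeasureTheory ENNReal

/-- Weighted `ℓʳ(ℤ)`-type quantity `(∑_{j∈ℤ} (ρ^{js} a_j)^r)^{1/r}`, with the sup
modification when `r = ∞`. -/
noncomputable def wSeq (ρ s : ℝ) (r : ℝ≥0∞) (a : ℤ → ℝ≥0∞) : ℝ≥0∞ :=
  if r = ∞ then ⨆ j : ℤ, ENNReal.ofReal (ρ ^ ((j : ℝ) * s)) * a j
  else (∑' j : ℤ, (ENNReal.ofReal (ρ ^ ((j : ℝ) * s)) * a j) ^ r.toReal) ^ (1 / r.toReal)

/-- Lorentz quasinorm `‖f‖_{L^{p,r}} = (∫_0^∞ (t · μ{|f| > t}^{1/p})^r dt/t)^{1/r}`,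
with the sup modification when `r = ∞`. -/
noncomputable def lorentzNorm {X : Type*} [MeasurableSpace X] (μ : Measure X)
    (p r : ℝ≥0∞) (f : X → ℂ) : ℝ≥0∞ :=
  if r = ∞ then ⨆ t : ℝ, ⨆ _ : 0 < t, ENNReal.ofReal t * μ {x | t < ‖f x‖} ^ (1 / p.toReal)
  else (∫⁻ t in Set.Ioi (0 : ℝ),
      (ENNReal.ofReal t * μ {x | t < ‖f x‖} ^ (1 / p.toReal)) ^ r.toReal /
        ENNReal.ofReal t) ^ (1 / r.toReal)

/-- Besov-type seminorm of a decomposition `g = (g_j)_{j ∈ ℤ}`: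
`(∑_{j∈ℤ} (2^{js} ‖g_j‖_{L^q})^r)^{1/r}`, with the sup modification when `r = ∞`. -/
noncomputable def besovNorm {X : Type*} [MeasurableSpace X] (μ : Measure X)
    (s : ℝ) (q r : ℝ≥0∞) (g : ℤ → X → ℂ) : ℝ≥0∞ :=
  wSeq 2 s r fun j => eLpNorm (g j) q μ

/-- `L^q`-quantity of an `[0,∞]`-valued function, essential sup when `q = ∞`. -/
noncomputable def eLpNormENN {X : Type*} [MeasurableSpace X] (μ : Measure X)
    (q : ℝ≥0∞) (F : X → ℝ≥0∞) : ℝ≥0∞ :=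
  if q = ∞ then essSup F μ else (∫⁻ x, F x ^ q.toReal ∂μ) ^ (1 / q.toReal)

/-!
Fix `x` and put `A = sup_j 2^{jα} |g_j x|`, `B = sup_j 2^{-jβ} |g_j x|`, so that
`|g_j x| ≤ min (2^{-jα} A) (2^{jβ} B)`. Summing the first bound over `j ≥ N` and the second over
`j < N` gives two geometric series; for `N = ⌊log₂ (A / B) / (α + β)⌋` both are
`≲ A^{1-θ} B^θ`, hence `|f x| ≤ C A^{1-θ} B^θ`. Hölder's inequality with the exponents
`q₀ / (1 - θ)` and `q₁ / θ`, whose reciprocals add up to `1 / p`, turns this pointwise bound into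
the `L^p` bound.
-/

section

variable {X : Type*} [MeasurableSpace X] {μ : Measure X}

-- Only `≤`: for `q = 0`, `eLpNormENN` is `1` whereas `eLpNorm` is `0`.
theorem eLpNorm_le_eLpNormENN (F : X → ℝ≥0∞) (q : ℝ≥0∞) :
    eLpNorm F q μ ≤ eLpNormENN μ q F := by
  rcases eq_or_ne q 0 with rfl | hq
  · simp
  unfold eLpNormENN
  split_ifs with hq_top
  · simp [hq_top, eLpNorm_exponent_top, eLpNormEssSup]
  · simp [eLpNorm_eq_lintegral_rpow_enorm_toReal hq hq_top]

theorem eLpNorm_ennreal_const_mul {G : X → ℝ≥0∞} (hG : AEMeasurable G μ) (c : ℝ≥0∞)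
    (q : ℝ≥0∞) : eLpNorm (fun x ↦ c * G x) q μ = c * eLpNorm G q μ := by
  rcases eq_or_ne q 0 with rfl | hq
  · simp
  rcases eq_or_ne q ∞ with rfl | hq_top
  · simp [eLpNorm_exponent_top, eLpNormEssSup, ENNReal.essSup_const_mul]
  have hq_pos : 0 < q.toReal := ENNReal.toReal_pos hq hq_top
  simp only [eLpNorm_eq_lintegral_rpow_enorm_toReal hq hq_top, enorm_eq_self,
    ENNReal.mul_rpow_of_nonneg _ _ hq_pos.le]
  rw [lintegral_const_mul'' _ (hG.pow_const _), ENNReal.mul_rpow_of_nonneg _ _ (by positivity),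
    ← ENNReal.rpow_mul, mul_one_div_cancel hq_pos.ne', ENNReal.rpow_one]

theorem eLpNorm_ennreal_mul_le_eLpNorm_top_mul {F G : X → ℝ≥0∞} (hG : AEMeasurable G μ)
    (q : ℝ≥0∞) : eLpNorm (F * G) q μ ≤ eLpNorm F ∞ μ * eLpNorm G q μ := by
  rw [← eLpNorm_ennreal_const_mul hG]
  refine eLpNorm_mono_enorm_ae ?_
  filter_upwards [enorm_ae_le_eLpNormEssSup F μ] with x hx
  simpa [eLpNorm_exponent_top] using mul_le_mul_left hx (G x)

-- Hölder's inequality for `[0, ∞]`-valued functions (Mathlib states it for normed groups).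
theorem eLpNorm_ennreal_mul_le {F G : X → ℝ≥0∞} (hF : AEMeasurable F μ) (hG : AEMeasurable G μ)
    {p q r : ℝ≥0∞} [hpqr : HolderTriple p q r] :
    eLpNorm (F * G) r μ ≤ eLpNorm F p μ * eLpNorm G q μ := by
  have hpqr := hpqr.one_div_eq
  obtain rfl | rfl | hp := ENNReal.trichotomy p
  · simp_all
  · obtain rfl : r = q := by simpa using hpqr
    exact eLpNorm_ennreal_mul_le_eLpNorm_top_mul hG r
  obtain rfl | rfl | hq := ENNReal.trichotomy q
  · simp_all
  · obtain rfl : r = p := by simpa using hpqr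
    rw [mul_comm F, mul_comm (eLpNorm F _ _)]
    exact eLpNorm_ennreal_mul_le_eLpNorm_top_mul hF r
  obtain ⟨hp₀, hp_top⟩ := ENNReal.toReal_pos_iff.mp hp
  obtain ⟨hq₀, hq_top⟩ := ENNReal.toReal_pos_iff.mp hq
  have hpqr' : 1 / r.toReal = 1 / p.toReal + 1 / q.toReal := by
    have := congr(ENNReal.toReal $(hpqr))
    rw [ENNReal.toReal_add (by simpa using hp₀.ne') (by simpa using hq₀.ne')] at this
    simpa
  have hr : 0 < r.toReal := one_div_pos.mp <| by rw [hpqr']; positivity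
  obtain ⟨hr₀, hr_top⟩ := ENNReal.toReal_pos_iff.mp hr
  have hrp : r.toReal < p.toReal := lt_of_one_div_lt_one_div hp <|
    hpqr' ▸ lt_add_of_pos_right _ (by positivity)
  simp only [eLpNorm_eq_eLpNorm' hr₀.ne' hr_top.ne, eLpNorm_eq_eLpNorm' hp₀.ne' hp_top.ne,
    eLpNorm_eq_eLpNorm' hq₀.ne' hq_top.ne, eLpNorm', enorm_eq_self]
  exact ENNReal.lintegral_Lp_mul_le_Lq_mul_Lr hr hrp hpqr' μ hF hG

theorem eLpNorm_ennreal_rpow_div {H : X → ℝ≥0∞} {c : ℝ} (hc : 0 < c) (q : ℝ≥0∞) :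
    eLpNorm (fun x ↦ H x ^ c) (q / ENNReal.ofReal c) μ = eLpNorm H q μ ^ c := by
  have := eLpNorm_enorm_rpow (μ := μ) (p := q / ENNReal.ofReal c) H hc
  rwa [ENNReal.div_mul_cancel (by simpa using hc) ofReal_ne_top] at this

theorem eLpNorm_rpow_mul_rpow_le {F G : X → ℝ≥0∞} (hF : AEMeasurable F μ)
    (hG : AEMeasurable G μ) {a b : ℝ} (ha : 0 < a) (hb : 0 < b) {p q₀ q₁ : ℝ≥0∞}
    (hp : p⁻¹ = ENNReal.ofReal a * q₀⁻¹ + ENNReal.ofReal b * q₁⁻¹) :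
    eLpNorm (fun x ↦ F x ^ a * G x ^ b) p μ ≤ eLpNorm F q₀ μ ^ a * eLpNorm G q₁ μ ^ b := by
  have ha' : ENNReal.ofReal a ≠ 0 := by simpa using ha
  have hb' : ENNReal.ofReal b ≠ 0 := by simpa using hb
  have : HolderTriple (q₀ / ENNReal.ofReal a) (q₁ / ENNReal.ofReal b) p :=
    ⟨by rw [ENNReal.inv_div (.inl ofReal_ne_top) (.inl ha'),
      ENNReal.inv_div (.inl ofReal_ne_top) (.inl hb'), hp, div_eq_mul_inv, div_eq_mul_inv]⟩
  rw [← eLpNorm_ennreal_rpow_div ha, ← eLpNorm_ennreal_rpow_div hb]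
  exact eLpNorm_ennreal_mul_le (hF.pow_const a) (hG.pow_const b)

end

theorem ofReal_two_rpow (x : ℝ) : ENNReal.ofReal ((2 : ℝ) ^ x) = 2 ^ x := by
  rw [← ENNReal.ofReal_rpow_of_pos two_pos, ENNReal.ofReal_ofNat]

noncomputable def weightedSup (s : ℝ) (a : ℤ → ℝ≥0∞) : ℝ≥0∞ :=
  ⨆ j : ℤ, 2 ^ ((j : ℝ) * s) * a j

noncomputable def dyadicConst (α β : ℝ) : ℝ≥0∞ :=
  2 ^ α * (∑' n : ℕ, (2 : ℝ≥0∞) ^ (-((n : ℝ) * α)) + ∑' n : ℕ, (2 : ℝ≥0∞) ^ (-((n : ℝ) * β)))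

theorem le_two_rpow_mul_weightedSup (s : ℝ) (a : ℤ → ℝ≥0∞) (j : ℤ) :
    a j ≤ 2 ^ (-((j : ℝ) * s)) * weightedSup s a := by
  calc a j = 2 ^ (-((j : ℝ) * s)) * (2 ^ ((j : ℝ) * s) * a j) := by
        rw [← mul_assoc, ← ENNReal.rpow_add _ _ two_ne_zero ofNat_ne_top, neg_add_cancel,
          ENNReal.rpow_zero, one_mul]
    _ ≤ 2 ^ (-((j : ℝ) * s)) * weightedSup s a :=
        mul_le_mul_right (le_iSup (fun i : ℤ ↦ 2 ^ ((i : ℝ) * s) * a i) j) _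

theorem tsum_two_rpow_neg_mul_ne_top {γ : ℝ} (hγ : 0 < γ) :
    ∑' n : ℕ, (2 : ℝ≥0∞) ^ (-((n : ℝ) * γ)) ≠ ∞ := by
  have hρ : (2 : ℝ≥0∞) ^ (-γ) < 1 :=
    ENNReal.rpow_lt_one_of_one_lt_of_neg one_lt_two (neg_neg_of_pos hγ)
  simp_rw [neg_mul_eq_mul_neg, mul_comm _ (-γ), ENNReal.rpow_mul_natCast,
    ENNReal.tsum_geometric]
  exact ENNReal.inv_ne_top.mpr (tsub_pos_of_lt hρ).ne'

theorem dyadicConst_ne_top {α β : ℝ} (hα : 0 < α) (hβ : 0 < β) : dyadicConst α β ≠ ∞ :=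
  ENNReal.mul_ne_top (ENNReal.rpow_ne_top_of_nonneg hα.le ofNat_ne_top)
    (ENNReal.add_ne_top.mpr ⟨tsum_two_rpow_neg_mul_ne_top hα, tsum_two_rpow_neg_mul_ne_top hβ⟩)

theorem dyadicConst_ne_zero (α β : ℝ) : dyadicConst α β ≠ 0 := by
  refine mul_ne_zero (ENNReal.rpow_pos two_pos ofNat_ne_top).ne' (ne_of_gt ?_)
  calc (0 : ℝ≥0∞) < (2 : ℝ≥0∞) ^ (-(((0 : ℕ) : ℝ) * α)) := by simp
    _ ≤ _ := (ENNReal.le_tsum 0).trans le_self_add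

theorem tsum_int_le_of_le_geometric (a : ℤ → ℝ≥0∞) (N : ℤ) {α β : ℝ} {M : ℝ≥0∞}
    (h_right : ∀ n : ℕ, a (N + n) ≤ 2 ^ (-((n : ℝ) * α)) * M)
    (h_left : ∀ n : ℕ, a (N + -(n + 1)) ≤ 2 ^ (-((n : ℝ) * β)) * M) :
    ∑' j, a j ≤ (∑' n : ℕ, (2 : ℝ≥0∞) ^ (-((n : ℝ) * α)) +
      ∑' n : ℕ, (2 : ℝ≥0∞) ^ (-((n : ℝ) * β))) * M := by
  rw [← (Equiv.addLeft N).tsum_eq, tsum_of_nat_of_neg_add_one ENNReal.summable ENNReal.summable,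
    add_mul, ← ENNReal.tsum_mul_right, ← ENNReal.tsum_mul_right]
  exact add_le_add (ENNReal.tsum_le_tsum h_right) (ENNReal.tsum_le_tsum h_left)

theorem exists_int_two_rpow_balance {α β θ : ℝ} (hα : 0 < α) (hβ : 0 < β)
    (hθ : θ = α / (α + β)) {A B : ℝ≥0∞} (hA₀ : A ≠ 0) (hA : A ≠ ∞) (hB₀ : B ≠ 0) (hB : B ≠ ∞) :
    ∃ N : ℤ, 2 ^ (-((N : ℝ) * α)) * A ≤ 2 ^ α * (A ^ (1 - θ) * B ^ θ) ∧
      2 ^ ((N : ℝ) * β) * B ≤ 2 ^ α * (A ^ (1 - θ) * B ^ θ) := by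
  have two_rpow_logb : ∀ {X : ℝ≥0∞}, X ≠ 0 → X ≠ ∞ → (2 : ℝ≥0∞) ^ Real.logb 2 X.toReal = X :=
    fun hX₀ hX ↦ by
      rw [← ofReal_two_rpow, Real.rpow_logb two_pos (by norm_num) (ENNReal.toReal_pos hX₀ hX),
        ENNReal.ofReal_toReal hX]
  set s := Real.logb 2 A.toReal
  set r := Real.logb 2 B.toReal
  set L := (s - r) / (α + β)
  have hαβ : 0 < α + β := by linarith
  have hθL : θ * (s - r) = α * L := by simp only [hθ, L]; field_simp
  have hθL' : (1 - θ) * (s - r) = β * L := by simp only [hθ, L]; field_simp; ring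
  have hN : (⌊L⌋ : ℝ) ≤ L := Int.floor_le L
  have hN' : L < ⌊L⌋ + 1 := Int.lt_floor_add_one L
  refine ⟨⌊L⌋, ?_, ?_⟩ <;>
  · rw [← two_rpow_logb hA₀ hA, ← two_rpow_logb hB₀ hB]
    simp only [← ENNReal.rpow_mul, ← ENNReal.rpow_add _ _ two_ne_zero ofNat_ne_top]
    refine ENNReal.rpow_le_rpow_of_exponent_le one_le_two ?_
    nlinarith [mul_lt_mul_of_pos_left hN' hα, mul_le_mul_of_nonneg_left hN hβ.le]

theorem tsum_le_dyadicConst_mul_weightedSup {α β θ : ℝ} (hα : 0 < α) (hβ : 0 < β)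
    (hθ : θ = α / (α + β)) (a : ℤ → ℝ≥0∞) :
    ∑' j, a j ≤ dyadicConst α β * weightedSup α a ^ (1 - θ) * weightedSup (-β) a ^ θ := by
  have hθ₀ : 0 < θ := hθ ▸ div_pos hα (by linarith)
  have hθ₁ : θ < 1 := by rw [hθ, div_lt_one (by linarith)]; linarith
  have hA_le := le_two_rpow_mul_weightedSup α a
  have hB_le := le_two_rpow_mul_weightedSup (-β) a
  set A := weightedSup α a
  set B := weightedSup (-β) a
  by_cases h₀ : A = 0 ∨ B = 0
  · have ha : ∀ j, a j = 0 := fun j ↦ by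
      rcases h₀ with h | h
      · exact nonpos_iff_eq_zero.mp (by simpa [h] using hA_le j)
      · exact nonpos_iff_eq_zero.mp (by simpa [h] using hB_le j)
    simp [ha]
  push Not at h₀
  by_cases h_top : A = ∞ ∨ B = ∞
  · have : dyadicConst α β * A ^ (1 - θ) * B ^ θ = ∞ := by
      have := dyadicConst_ne_zero α β
      rcases h_top with h | h <;>
        simp [h, ENNReal.rpow_eq_zero_iff, hθ₀, hθ₀.le, hθ₁, hθ₁.le, h₀.1, h₀.2, this]
    simp [this]
  push Not at h_top
  obtain ⟨N, hNA, hNB⟩ := exists_int_two_rpow_balance hα hβ hθ h₀.1 h_top.1 h₀.2 h_top.2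
  rw [mul_assoc, dyadicConst, mul_comm (2 ^ α), mul_assoc]
  refine tsum_int_le_of_le_geometric a N (fun n ↦ ?_) (fun n ↦ ?_)
  · calc a (N + n) ≤ 2 ^ (-(((N + n : ℤ) : ℝ) * α)) * A := hA_le _
      _ = 2 ^ (-((n : ℝ) * α)) * (2 ^ (-((N : ℝ) * α)) * A) := by
        rw [← mul_assoc, ← ENNReal.rpow_add _ _ two_ne_zero ofNat_ne_top]; push_cast; ring_nf
      _ ≤ _ := mul_le_mul_right hNA _
  · calc a (N + -(n + 1)) ≤ 2 ^ (-(((N + -(n + 1) : ℤ) : ℝ) * -β)) * B := hB_le _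
      _ ≤ 2 ^ (-((n : ℝ) * β)) * (2 ^ ((N : ℝ) * β) * B) := by
        rw [← mul_assoc, ← ENNReal.rpow_add _ _ two_ne_zero ofNat_ne_top]
        refine mul_le_mul_left (ENNReal.rpow_le_rpow_of_exponent_le one_le_two ?_) _
        push_cast; linarith
      _ ≤ _ := mul_le_mul_right hNB _

theorem statement2_general (n : ℕ) (α β : ℝ) (hα : 0 < α) (hβ : 0 < β)
    (q₀ q₁ : ℝ≥0∞)
    (θ : ℝ) (hθ : θ = α / (α + β))
    (p : ℝ≥0∞) (hp : p⁻¹ = ENNReal.ofReal (1 - θ) * q₀⁻¹ + ENNReal.ofReal θ * q₁⁻¹) :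
    ∃ C : ℝ≥0∞, C ≠ ∞ ∧ ∀ (g : ℤ → (Fin n → ℝ) → ℂ) (f : (Fin n → ℝ) → ℂ),
      (∀ j, Measurable (g j)) → Measurable f →
      (∀ᵐ x ∂(volume : Measure (Fin n → ℝ)),
        (Summable fun j => ‖g j x‖) ∧ HasSum (fun j => g j x) (f x)) →
      eLpNorm f p volume ≤
        C * eLpNormENN volume q₀
            (fun x => ⨆ j : ℤ, ENNReal.ofReal ((2 : ℝ) ^ ((j : ℝ) * α)) * (‖g j x‖₊ : ℝ≥0∞)) ^
              (1 - θ) *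
          eLpNormENN volume q₁
            (fun x => ⨆ j : ℤ, ENNReal.ofReal ((2 : ℝ) ^ (-(j : ℝ) * β)) * (‖g j x‖₊ : ℝ≥0∞)) ^
              θ := by
  have hθ₀ : 0 < θ := hθ ▸ div_pos hα (by linarith)
  have hθ₁ : 0 < 1 - θ := by rw [hθ, sub_pos, div_lt_one (by linarith)]; linarith
  refine ⟨dyadicConst α β, dyadicConst_ne_top hα hβ, fun g f hg _ hfg => ?_⟩
  set F := fun x ↦ weightedSup α (‖g · x‖ₑ)
  set G := fun x ↦ weightedSup (-β) (‖g · x‖ₑ)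
  have hF : Measurable F := .iSup fun j ↦ measurable_const.mul (hg j).enorm
  have hG : Measurable G := .iSup fun j ↦ measurable_const.mul (hg j).enorm
  have h_pointwise : ∀ᵐ x, ‖f x‖ₑ ≤ dyadicConst α β * (F x ^ (1 - θ) * G x ^ θ) := by
    filter_upwards [hfg] with x hx
    rw [← hx.2.tsum_eq, ← mul_assoc]
    exact enorm_tsum_le_tsum_enorm.trans (tsum_le_dyadicConst_mul_weightedSup hα hβ hθ _)
  calc eLpNorm f p volume
      ≤ eLpNorm (fun x ↦ dyadicConst α β * (F x ^ (1 - θ) * G x ^ θ)) p volume :=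
        eLpNorm_mono_enorm_ae (by simpa using h_pointwise)
    _ = dyadicConst α β * eLpNorm (fun x ↦ F x ^ (1 - θ) * G x ^ θ) p volume :=
        eLpNorm_ennreal_const_mul (by fun_prop) _ _
    _ ≤ dyadicConst α β * (eLpNorm F q₀ volume ^ (1 - θ) * eLpNorm G q₁ volume ^ θ) := by
        gcongr
        exact eLpNorm_rpow_mul_rpow_le hF.aemeasurable hG.aemeasurable hθ₁ hθ₀ hp
    _ ≤ dyadicConst α β * (eLpNormENN volume q₀ F ^ (1 - θ) * eLpNormENN volume q₁ G ^ θ) := by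
        gcongr <;> exact eLpNorm_le_eLpNormENN _ _
    _ = _ := by
        simp only [F, G, weightedSup, ofReal_two_rpow, neg_mul_comm, enorm_eq_nnnorm, mul_assoc]

/-- Theorem 1 of the paper, inequality (6), for an arbitrary a.e. absolutely
convergent decomposition `f = ∑_{j∈ℤ} g_j` on `ℝⁿ`:
`‖f‖_{L^p} ≤ C ‖sup_j 2^{jα}|g_j|‖_{L^{q₀}}^{1-θ} ‖sup_j 2^{-jβ}|g_j|‖_{L^{q₁}}^θ`
where `θ = α/(α+β)` and `1/p = (1-θ)/q₀ + θ/q₁`. -/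
theorem statement2 (n : ℕ) (α β : ℝ) (hα : 0 < α) (hβ : 0 < β)
    (q₀ q₁ : ℝ≥0∞) (hq₀ : 1 ≤ q₀) (hq₁ : 1 ≤ q₁)
    (θ : ℝ) (hθ : θ = α / (α + β))
    (p : ℝ≥0∞) (hp : p⁻¹ = ENNReal.ofReal (1 - θ) * q₀⁻¹ + ENNReal.ofReal θ * q₁⁻¹) :
    ∃ C : ℝ≥0∞, C ≠ ∞ ∧ ∀ (g : ℤ → (Fin n → ℝ) → ℂ) (f : (Fin n → ℝ) → ℂ),
      (∀ j, Measurable (g j)) → Measurable f →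
      (∀ᵐ x ∂(volume : Measure (Fin n → ℝ)),
        (Summable fun j => ‖g j x‖) ∧ HasSum (fun j => g j x) (f x)) →
      eLpNorm f p volume ≤
        C * eLpNormENN volume q₀
            (fun x => ⨆ j : ℤ, ENNReal.ofReal ((2 : ℝ) ^ ((j : ℝ) * α)) * (‖g j x‖₊ : ℝ≥0∞)) ^
              (1 - θ) *
          eLpNormENN volume q₁
            (fun x => ⨆ j : ℤ, ENNReal.ofReal ((2 : ℝ) ^ (-(j : ℝ) * β)) * (‖g j x‖₊ : ℝ≥0∞)) ^
              θ :=
  statement2_general n α β hα hβ q₀ q₁ θ hθ p hp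
end

section
/- Let (X, μ) be a sigma-finite measure space, 1 < p < ∞ and 1 ≤ r ≤ ∞. There exists a constant C₀ such that every measurable f : X → ℂ with ‖f‖_{L^{p,r}} < ∞ can be decomposed as f = Σ_{j∈ℤ} f_j pointwise, where the f_j are measurable, have pairwise disjoint supports (f_j f_k = 0 whenever j ≠ k), and satisfy ( Σ_{j∈ℤ} (2^{-j(p-1)/p} ‖f_j‖_{L^1})^r )^{1/r} + ( Σ_{j∈ℤ} (2^{j/p} ‖f_j‖_{L^∞})^r )^{1/r} ≤ C₀ ‖f‖_{L^{p,r}} (with sup modifications when r = ∞). -/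
open MeasureTheory ENNReal

open Filter Function Topology Set

/-!
Write `D(t) = μ {|f| > t}` and `m_j = inf {t ≥ 0 | D(t) ≤ 2^j}`, the decreasing rearrangement of
`f` at `2^j`. The pieces are `f` restricted to the dyadic layers `{m_{j+1} < |f| ≤ m_j}`: such a
layer has measure at most `2^{j+1}` and `|f| ≤ m_j` on it, so both weighted sequences are
dominated by `(2^{j/p} m_j)_j`. Since `D(t) > 2^j` for `t < m_j`, the layer-cake formula for the
measure `∑_j 2^{jr/p} δ_j` on `ℤ` turns `∑_j (2^{j/p} m_j)^r` into the Lorentz integral of a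
geometric sum bounded by `C D(t)^{r/p}`; for `r = ∞` evaluate the supremum at `t = m_j / 2`.
A finite Lorentz norm forces `D(t) < ∞` for `t > 0` and `D(t) → 0`, so the layers are disjoint
and cover `{f ≠ 0}` up to a null set.
-/

lemma wSeq_le_mul_wSeq {ρ s s' : ℝ} {r : ℝ≥0∞} (hr : r ≠ 0) {a b : ℤ → ℝ≥0∞} {c : ℝ≥0∞}
    (h : ∀ j : ℤ, ENNReal.ofReal (ρ ^ ((j : ℝ) * s)) * a j ≤
      c * (ENNReal.ofReal (ρ ^ ((j : ℝ) * s')) * b j)) :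
    wSeq ρ s r a ≤ c * wSeq ρ s' r b := by
  unfold wSeq
  split_ifs with hr_top
  · rw [ENNReal.mul_iSup]
    exact iSup_mono h
  · have hR : 0 < r.toReal := ENNReal.toReal_pos hr hr_top
    calc (∑' j : ℤ, (ENNReal.ofReal (ρ ^ ((j : ℝ) * s)) * a j) ^ r.toReal) ^ (1 / r.toReal)
        ≤ (∑' j : ℤ, c ^ r.toReal * (ENNReal.ofReal (ρ ^ ((j : ℝ) * s')) * b j) ^ r.toReal)
            ^ (1 / r.toReal) := by
          gcongr with j
          rw [← ENNReal.mul_rpow_of_nonneg _ _ hR.le]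
          exact ENNReal.rpow_le_rpow (h j) hR.le
      _ = _ := by
          rw [ENNReal.tsum_mul_left, ENNReal.mul_rpow_of_nonneg _ _ (by positivity), one_div,
            ENNReal.rpow_rpow_inv hR.ne']

lemma natCast_le_two_rpow (n : ℕ) : (n : ℝ≥0∞) ≤ 2 ^ ((n : ℤ) : ℝ) := by
  rw [Int.cast_natCast, ENNReal.rpow_natCast]
  exact_mod_cast Nat.lt_two_pow_self.le

lemma inv_one_sub_two_rpow_neg_ne_top {s : ℝ} (hs : 0 < s) : (1 - (2 : ℝ≥0∞) ^ (-s))⁻¹ ≠ ∞ :=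
  ENNReal.inv_ne_top.2 (tsub_pos_of_lt
    (ENNReal.rpow_lt_one_of_one_lt_of_neg one_lt_two (neg_neg_of_pos hs))).ne'

lemma tsum_indicator_two_rpow_lt_le {s : ℝ} (hs : 0 < s) (d : ℝ≥0∞) :
    ∑' j : ℤ, {j : ℤ | (2 : ℝ≥0∞) ^ (j : ℝ) < d}.indicator (fun j => 2 ^ ((j : ℝ) * s)) j ≤
      (1 - 2 ^ (-s))⁻¹ * d ^ s := by
  rcases eq_or_ne d ∞ with rfl | hd
  · rw [ENNReal.top_rpow_of_pos hs, ENNReal.mul_top (ENNReal.inv_ne_zero.2 (by simp))]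
    exact le_top
  set N := {j : ℤ | (2 : ℝ≥0∞) ^ (j : ℝ) < d}
  rcases N.eq_empty_or_nonempty with hN | hN
  · simp [hN]
  have hbdd : ∃ b : ℤ, ∀ j ∈ N, j ≤ b := by
    obtain ⟨n, hn⟩ := ENNReal.exists_nat_gt hd
    refine ⟨n, fun j hj => ?_⟩
    by_contra! hnj
    exact ((hj.trans hn).trans_le (natCast_le_two_rpow n)).not_ge
      (ENNReal.rpow_le_rpow_of_exponent_le one_le_two (by exact_mod_cast hnj.le))
  obtain ⟨k, hk, hmax⟩ := Int.exists_greatest_of_bdd hbdd hN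
  have hinj : Injective fun i : ℕ => k - i := sub_right_injective.comp Nat.cast_injective
  have hsupp : support (N.indicator fun j : ℤ => (2 : ℝ≥0∞) ^ ((j : ℝ) * s)) ⊆
      range fun i : ℕ => k - i := fun j hj =>
    ⟨(k - j).toNat, by
      simp [Int.toNat_of_nonneg (sub_nonneg.2 (hmax j (mem_of_indicator_ne_zero hj)))]⟩
  calc ∑' j : ℤ, N.indicator (fun j => (2 : ℝ≥0∞) ^ ((j : ℝ) * s)) j
      = ∑' i : ℕ, N.indicator (fun j => (2 : ℝ≥0∞) ^ ((j : ℝ) * s)) (k - i) :=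
        (hinj.tsum_eq hsupp).symm
    _ ≤ ∑' i : ℕ, 2 ^ ((k : ℝ) * s) * (2 ^ (-s)) ^ i := by
        refine ENNReal.tsum_le_tsum fun i => (indicator_le_self _ _ _).trans_eq ?_
        rw [← ENNReal.rpow_natCast, ← ENNReal.rpow_mul,
          ← ENNReal.rpow_add _ _ two_ne_zero ofNat_ne_top]
        push_cast
        ring_nf
    _ = 2 ^ ((k : ℝ) * s) * (1 - 2 ^ (-s))⁻¹ := by
        rw [ENNReal.tsum_mul_left, ENNReal.tsum_geometric]
    _ ≤ (1 - 2 ^ (-s))⁻¹ * d ^ s := by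
        rw [mul_comm, ENNReal.rpow_mul]
        gcongr
        exact hk.le

/-- The layer-cake formula for the measure on `ι` with point masses `W j`. -/
lemma tsum_mul_ofReal_rpow_eq_lintegral {ι : Type*} [MeasurableSpace ι]
    [MeasurableSingletonClass ι] [Countable ι] (W : ι → ℝ≥0∞) {m : ι → ℝ} (hm : 0 ≤ m)
    {R : ℝ} (hR : 0 < R) :
    ∑' j, W j * ENNReal.ofReal (m j ^ R) = ENNReal.ofReal R *
      ∫⁻ t in Ioi 0, (∑' j, {j | t < m j}.indicator W j) * ENNReal.ofReal (t ^ (R - 1)) := by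
  have h := lintegral_rpow_eq_lintegral_meas_lt_mul (Measure.count.withDensity W)
    (ae_of_all _ hm) (measurable_of_countable m).aemeasurable hR
  rw [lintegral_withDensity_eq_lintegral_mul _ (measurable_of_countable _)
    (measurable_of_countable _), lintegral_count] at h
  convert h using 5 with t
  · rfl
  · rw [withDensity_apply _ (Set.to_countable _).measurableSet, ← lintegral_indicator
      (Set.to_countable _).measurableSet, lintegral_count]

lemma exists_hasSum_ae_eq_indicator {X ι E : Type*} [MeasurableSpace X] {μ : Measure X}
    [Countable ι] [Nonempty ι] [AddCommMonoid E] [TopologicalSpace E] [MeasurableSpace E]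
    {f : X → E} (hf : Measurable f) {A : ι → Set X} (hA : ∀ i, MeasurableSet (A i))
    (hdisj : Pairwise (Disjoint on A)) (hnull : μ (support f \ ⋃ i, A i) = 0) :
    ∃ F : ι → X → E, (∀ i, Measurable (F i)) ∧ (∀ x, HasSum (fun i => F i x) (f x)) ∧
      (∀ i j, i ≠ j → ∀ x, F i x = 0 ∨ F j x = 0) ∧ ∀ i, F i =ᵐ[μ] (A i).indicator f := by
  classical
  obtain ⟨i₀⟩ := ‹Nonempty ι›
  set T : ι → Set X := fun i => A i ∪ {x | i = i₀ ∧ x ∉ ⋃ k, A k}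
  have hT : ∀ x, ∃ i, ∀ j, x ∈ T j ↔ j = i := by
    intro x
    by_cases hx : ∃ i, x ∈ A i
    · obtain ⟨i, hi⟩ := hx
      refine ⟨i, fun j => ⟨?_, fun hj => hj ▸ Or.inl hi⟩⟩
      rintro (hj | ⟨-, hN⟩)
      · by_contra hji
        exact disjoint_left.1 (hdisj hji) hj hi
      · exact absurd (mem_iUnion_of_mem i hi) hN
    · push Not at hx
      refine ⟨i₀, fun j => ⟨?_, fun hj => Or.inr ⟨hj, by simpa using hx⟩⟩⟩
      rintro (hj | ⟨hj, -⟩)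
      exacts [absurd hj (hx j), hj]
  choose J hJ using hT
  have hF : ∀ i x, (T i).indicator f x = if i = J x then f x else 0 := fun i x => by
    simp only [indicator_apply, hJ]
  refine ⟨fun i => (T i).indicator f,
    fun i => hf.indicator ((hA i).union ((MeasurableSet.const _).inter
      (MeasurableSet.iUnion hA).compl)),
    fun x => ?_, fun i j hij x => ?_, fun i => ?_⟩
  · simp only [hF]
    exact hasSum_ite_eq _ _
  · simp only [hF]
    by_cases hi : i = J x
    · exact Or.inr (if_neg (hi ▸ hij).symm)
    · exact Or.inl (if_neg hi)
  · filter_upwards [measure_eq_zero_iff_ae_notMem.1 hnull] with x hx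
    by_cases hfx : f x = 0
    · simp [indicator_apply, hfx]
    have hxT : x ∈ T i ↔ x ∈ A i :=
      or_iff_left fun h => h.2 (by_contra fun h' => hx ⟨hfx, h'⟩)
    simp only [indicator_apply, hxT]

section Rearrangement

variable {X E : Type*} [MeasurableSpace X] [NormedAddCommGroup E] (μ : Measure X) (f : X → E)

noncomputable def distribution (t : ℝ) : ℝ≥0∞ := μ {x | t < ‖f x‖}

/-- The decreasing rearrangement of `f` evaluated at `2 ^ j`. -/
noncomputable def dyadicLevel (j : ℤ) : ℝ :=
  sInf {t : ℝ | 0 ≤ t ∧ distribution μ f t ≤ 2 ^ (j : ℝ)}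

def dyadicLayer (j : ℤ) : Set X :=
  {x | dyadicLevel μ f (j + 1) < ‖f x‖ ∧ ‖f x‖ ≤ dyadicLevel μ f j}

variable {μ f}

lemma distribution_antitone : Antitone (distribution μ f) :=
  fun _ _ hst => measure_mono fun _ hx => hst.trans_lt hx

lemma distribution_le_of_forall_lt {t : ℝ} {c : ℝ≥0∞}
    (h : ∀ s, t < s → distribution μ f s ≤ c) : distribution μ f t ≤ c := by
  have hunion : {x | t < ‖f x‖} = ⋃ n : ℕ, {x | t + 1 / ((n : ℝ) + 1) < ‖f x‖} := by
    ext x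
    simp only [mem_ofPred_eq, mem_iUnion]
    refine ⟨fun hx => ?_, fun ⟨n, hn⟩ => lt_of_le_of_lt (le_add_of_nonneg_right (by positivity)) hn⟩
    obtain ⟨n, hn⟩ := exists_nat_one_div_lt (sub_pos.2 hx)
    exact ⟨n, by linarith⟩
  have hmono : Monotone fun n : ℕ => {x | t + 1 / ((n : ℝ) + 1) < ‖f x‖} :=
    fun n k hnk x (hx : t + 1 / ((n : ℝ) + 1) < ‖f x‖) =>
      show t + 1 / ((k : ℝ) + 1) < ‖f x‖ by linarith [Nat.one_div_le_one_div (α := ℝ) hnk]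
  rw [distribution, hunion, hmono.measure_iUnion]
  exact iSup_le fun n => h _ (lt_add_of_pos_right _ (by positivity))

lemma distribution_ne_top_of_forall_le {P : ℝ} {K : ℝ≥0∞} (hP : 0 < P) (hK : K ≠ ∞)
    (h : ∀ t, 0 < t → ENNReal.ofReal t * distribution μ f t ^ (1 / P) ≤ K) {t : ℝ} (ht : 0 < t) :
    distribution μ f t ≠ ∞ := by
  intro htop
  have := h t ht
  rw [htop, ENNReal.top_rpow_of_pos (by positivity), ENNReal.mul_top (ofReal_pos.2 ht).ne'] at this
  exact hK (top_le_iff.1 this)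

lemma tendsto_distribution_of_forall_le {P : ℝ} {K : ℝ≥0∞} (hP : 0 < P) (hK : K ≠ ∞)
    (h : ∀ t, 0 < t → ENNReal.ofReal t * distribution μ f t ^ (1 / P) ≤ K) :
    Tendsto (distribution μ f) atTop (𝓝 0) := by
  have hbound : ∀ᶠ t in atTop, distribution μ f t ≤ (K / ENNReal.ofReal t) ^ P := by
    filter_upwards [eventually_gt_atTop 0] with t ht
    have hroot : distribution μ f t ^ (1 / P) ≤ K / ENNReal.ofReal t :=
      (ENNReal.le_div_iff_mul_le (Or.inl (ofReal_pos.2 ht).ne') (Or.inl ofReal_ne_top)).2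
        (mul_comm (ENNReal.ofReal t) _ ▸ h t ht)
    calc distribution μ f t = (distribution μ f t ^ (1 / P)) ^ P := by
          rw [← ENNReal.rpow_mul, one_div_mul_cancel hP.ne', ENNReal.rpow_one]
      _ ≤ (K / ENNReal.ofReal t) ^ P := ENNReal.rpow_le_rpow hroot hP.le
  have hlim : Tendsto (fun t => (K / ENNReal.ofReal t) ^ P) atTop (𝓝 0) := by
    have h1 : Tendsto (fun t => K / ENNReal.ofReal t) atTop (𝓝 0) := by
      simpa using ENNReal.Tendsto.const_div (a := K) tendsto_ofReal_atTop (Or.inr hK)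
    simpa [Function.comp_def, ENNReal.zero_rpow_of_pos hP] using
      ((ENNReal.continuous_rpow_const (y := P)).tendsto 0).comp h1
  exact tendsto_of_tendsto_of_tendsto_of_le_of_le' tendsto_const_nhds hlim
    (Eventually.of_forall fun _ => bot_le) hbound

lemma dyadicLevel_nonneg (j : ℤ) : 0 ≤ dyadicLevel μ f j :=
  Real.sInf_nonneg fun _ ht => ht.1

lemma dyadicLevel_le {j : ℤ} {t : ℝ} (ht : 0 ≤ t) (htj : distribution μ f t ≤ 2 ^ (j : ℝ)) :
    dyadicLevel μ f j ≤ t :=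
  csInf_le ⟨0, fun _ hs => hs.1⟩ ⟨ht, htj⟩

lemma lt_distribution_of_lt_dyadicLevel {j : ℤ} {t : ℝ} (ht : 0 ≤ t)
    (htj : t < dyadicLevel μ f j) : 2 ^ (j : ℝ) < distribution μ f t := by
  by_contra! h
  exact htj.not_ge (dyadicLevel_le ht h)

lemma nonempty_distribution_le (hD : Tendsto (distribution μ f) atTop (𝓝 0)) (j : ℤ) :
    {t : ℝ | 0 ≤ t ∧ distribution μ f t ≤ 2 ^ (j : ℝ)}.Nonempty :=
  ((eventually_ge_atTop 0).and
    (hD.eventually (ge_mem_nhds (ENNReal.rpow_pos two_pos ofNat_ne_top)))).exists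

lemma distribution_dyadicLevel_le (hD : Tendsto (distribution μ f) atTop (𝓝 0)) (j : ℤ) :
    distribution μ f (dyadicLevel μ f j) ≤ 2 ^ (j : ℝ) := by
  refine distribution_le_of_forall_lt fun s hs => ?_
  obtain ⟨u, hu, hus⟩ :=
    (csInf_lt_iff ⟨0, fun _ ht => ht.1⟩ (nonempty_distribution_le hD j)).1 hs
  exact (distribution_antitone hus.le).trans hu.2

lemma dyadicLevel_antitone (hD : Tendsto (distribution μ f) atTop (𝓝 0)) :
    Antitone (dyadicLevel μ f) := fun j k hjk =>
  csInf_le_csInf ⟨0, fun _ ht => ht.1⟩ (nonempty_distribution_le hD j) fun t ht =>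
    ⟨ht.1, ht.2.trans (ENNReal.rpow_le_rpow_of_exponent_le one_le_two (by exact_mod_cast hjk))⟩

lemma measurableSet_dyadicLayer (hf : Measurable fun x => ‖f x‖) (j : ℤ) :
    MeasurableSet (dyadicLayer μ f j) :=
  (measurableSet_lt measurable_const hf).inter (measurableSet_le hf measurable_const)

lemma pairwise_disjoint_dyadicLayer (hD : Tendsto (distribution μ f) atTop (𝓝 0)) :
    Pairwise (Disjoint on dyadicLayer μ f) := by
  intro j k hjk
  wlog hlt : j < k generalizing j k
  · exact (this hjk.symm (hjk.lt_or_gt.resolve_left hlt)).symm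
  exact disjoint_left.2 fun x hxj hxk =>
    hxj.1.not_ge (hxk.2.trans (dyadicLevel_antitone hD (by omega : j + 1 ≤ k)))

lemma measure_dyadicLayer_le (hD : Tendsto (distribution μ f) atTop (𝓝 0)) (j : ℤ) :
    μ (dyadicLayer μ f j) ≤ 2 ^ ((j : ℝ) + 1) := by
  calc μ (dyadicLayer μ f j) ≤ distribution μ f (dyadicLevel μ f (j + 1)) :=
        measure_mono fun _ hx => hx.1
    _ ≤ 2 ^ ((j : ℝ) + 1) := by exact_mod_cast distribution_dyadicLevel_le hD (j + 1)

lemma forall_dyadicLevel_lt_of_notMem_dyadicLayer (hD : Tendsto (distribution μ f) atTop (𝓝 0))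
    (hfin : ∀ t, 0 < t → distribution μ f t ≠ ∞) {x : X} (hx : f x ≠ 0)
    (hxA : ∀ j, x ∉ dyadicLayer μ f j) (j : ℤ) : dyadicLevel μ f j < ‖f x‖ := by
  by_contra! hj
  have hpos : 0 < ‖f x‖ := norm_pos_iff.2 hx
  have hex : ∃ k, dyadicLevel μ f k < ‖f x‖ := by
    obtain ⟨n, hn⟩ := ENNReal.exists_nat_gt (hfin _ (half_pos hpos))
    exact ⟨n, (dyadicLevel_le (half_pos hpos).le (hn.le.trans (natCast_le_two_rpow n))).trans_lt
      (half_lt_self hpos)⟩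
  obtain ⟨k, hk, hmin⟩ := Int.exists_least_of_bdd ⟨j, fun k hk => by
    by_contra! hkj
    exact hk.not_ge (hj.trans (dyadicLevel_antitone hD hkj.le))⟩ hex
  refine hxA (k - 1) ⟨by simpa using hk, not_lt.1 fun h => ?_⟩
  linarith [hmin _ h]

lemma measure_support_diff_iUnion_dyadicLayer_eq_zero
    (hD : Tendsto (distribution μ f) atTop (𝓝 0)) (hfin : ∀ t, 0 < t → distribution μ f t ≠ ∞) :
    μ (support f \ ⋃ j, dyadicLayer μ f j) = 0 := by
  have hle : ∀ n : ℕ, μ (support f \ ⋃ j, dyadicLayer μ f j) ≤ 2⁻¹ ^ n := fun n =>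
    calc μ (support f \ ⋃ j, dyadicLayer μ f j)
        ≤ distribution μ f (dyadicLevel μ f (-n)) := measure_mono fun x hx =>
          forall_dyadicLevel_lt_of_notMem_dyadicLayer hD hfin hx.1
            (fun j hj => hx.2 (mem_iUnion_of_mem j hj)) _
      _ ≤ 2 ^ (((-n : ℤ)) : ℝ) := distribution_dyadicLevel_le hD _
      _ = 2⁻¹ ^ n := by
          rw [Int.cast_neg, Int.cast_natCast, ENNReal.rpow_neg, ENNReal.rpow_natCast,
            ENNReal.inv_pow]
  exact le_zero_iff.1 (ge_of_tendsto' (ENNReal.tendsto_pow_atTop_nhds_zero_of_lt_one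
    (by norm_num)) hle)

lemma eLpNorm_indicator_dyadicLayer_le (q : ℝ≥0∞) (j : ℤ) :
    eLpNorm ((dyadicLayer μ f j).indicator f) q μ ≤
      ENNReal.ofReal (dyadicLevel μ f j) * μ (dyadicLayer μ f j) ^ (1 / q.toReal) := by
  calc eLpNorm ((dyadicLayer μ f j).indicator f) q μ
      ≤ eLpNorm ((dyadicLayer μ f j).indicator fun _ => dyadicLevel μ f j) q μ :=
        eLpNorm_mono fun x => by
          by_cases hx : x ∈ dyadicLayer μ f j
          · simpa [hx, abs_of_nonneg (dyadicLevel_nonneg j)] using hx.2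
          · simp [hx]
    _ ≤ _ := by
        simpa [Real.enorm_of_nonneg (dyadicLevel_nonneg j)] using
          eLpNorm_indicator_const_le (s := dyadicLayer μ f j) (μ := μ) (dyadicLevel μ f j) q

lemma two_rpow_mul_eLpNorm_one_indicator_dyadicLayer_le
    (hD : Tendsto (distribution μ f) atTop (𝓝 0)) {P : ℝ} (hP : P ≠ 0) (j : ℤ) :
    ENNReal.ofReal (2 ^ ((j : ℝ) * (-(P - 1) / P))) *
        eLpNorm ((dyadicLayer μ f j).indicator f) 1 μ ≤
      2 * (ENNReal.ofReal (2 ^ ((j : ℝ) * (1 / P))) * ENNReal.ofReal (dyadicLevel μ f j)) := by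
  have hweight : (2 : ℝ≥0∞) ^ ((j : ℝ) * (-(P - 1) / P)) * 2 ^ ((j : ℝ) + 1) =
      2 * 2 ^ ((j : ℝ) * (1 / P)) := by
    rw [← ENNReal.rpow_add _ _ two_ne_zero ofNat_ne_top,
      show (j : ℝ) * (-(P - 1) / P) + (j + 1) = 1 + j * (1 / P) by field_simp; ring,
      ENNReal.rpow_add _ _ two_ne_zero ofNat_ne_top, ENNReal.rpow_one]
  calc ENNReal.ofReal (2 ^ ((j : ℝ) * (-(P - 1) / P))) *
        eLpNorm ((dyadicLayer μ f j).indicator f) 1 μ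
      ≤ ENNReal.ofReal (2 ^ ((j : ℝ) * (-(P - 1) / P))) *
          (ENNReal.ofReal (dyadicLevel μ f j) * 2 ^ ((j : ℝ) + 1)) := by
        gcongr
        refine (eLpNorm_indicator_dyadicLayer_le 1 j).trans ?_
        simpa using mul_le_mul_right (measure_dyadicLayer_le hD j) _
    _ = ENNReal.ofReal (dyadicLevel μ f j) *
          (2 ^ ((j : ℝ) * (-(P - 1) / P)) * 2 ^ ((j : ℝ) + 1)) := by
        rw [← ENNReal.ofReal_rpow_of_pos two_pos, ofReal_ofNat]
        ring
    _ = _ := by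
        rw [hweight, ← ENNReal.ofReal_rpow_of_pos two_pos, ofReal_ofNat]
        ring

end Rearrangement

section Lorentz

variable {X : Type*} [MeasurableSpace X] {μ : Measure X} {p r : ℝ≥0∞} {f : X → ℂ}

lemma ofReal_mul_rpow_div_ofReal {t : ℝ} (ht : 0 < t) (c : ℝ≥0∞) {R : ℝ} (hR : 0 ≤ R) :
    (ENNReal.ofReal t * c) ^ R / ENNReal.ofReal t = c ^ R * ENNReal.ofReal (t ^ (R - 1)) := by
  rw [ENNReal.mul_rpow_of_nonneg _ _ hR, ENNReal.ofReal_rpow_of_pos ht, Real.rpow_sub_one ht.ne',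
    ENNReal.ofReal_div_of_pos ht, mul_comm, mul_div_assoc]

lemma lorentzNorm_eq_lintegral (hr : r ≠ ∞) :
    lorentzNorm μ p r f = (∫⁻ t in Ioi 0, distribution μ f t ^ (r.toReal / p.toReal) *
      ENNReal.ofReal (t ^ (r.toReal - 1))) ^ (1 / r.toReal) := by
  rw [lorentzNorm, if_neg hr]
  congr 1
  refine setLIntegral_congr_fun measurableSet_Ioi fun t ht => ?_
  rw [ofReal_mul_rpow_div_ofReal ht _ toReal_nonneg, ← ENNReal.rpow_mul, one_div_mul_eq_div]
  rfl

lemma mul_distribution_rpow_le_lorentzNorm (hr0 : r ≠ 0) (hr : r ≠ ∞) {t : ℝ} (ht : 0 < t) :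
    ENNReal.ofReal t * distribution μ f t ^ (1 / p.toReal) ≤
      ENNReal.ofReal r.toReal ^ (1 / r.toReal) * lorentzNorm μ p r f := by
  set R := r.toReal
  set s := R / p.toReal
  have hR : 0 < R := toReal_pos hr0 hr
  -- the layer-cake formula for the single point mass `D(t)^s δ_t`
  have hcake := tsum_mul_ofReal_rpow_eq_lintegral (fun _ : Unit => distribution μ f t ^ s)
    (m := fun _ => t) (fun _ => ht.le) hR
  simp only [tsum_fintype, Finset.univ_unique, Finset.sum_singleton] at hcake
  have hle : distribution μ f t ^ s * ENNReal.ofReal (t ^ R) ≤ ENNReal.ofReal R *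
      ∫⁻ u in Ioi 0, distribution μ f u ^ s * ENNReal.ofReal (u ^ (R - 1)) := by
    rw [hcake]
    gcongr with u
    by_cases hut : u < t
    · simpa [hut] using ENNReal.rpow_le_rpow (distribution_antitone hut.le) (by positivity)
    · simp [hut]
  calc ENNReal.ofReal t * distribution μ f t ^ (1 / p.toReal)
      = (distribution μ f t ^ s * ENNReal.ofReal (t ^ R)) ^ (1 / R) := by
        rw [ENNReal.mul_rpow_of_nonneg _ _ (by positivity), ← ENNReal.rpow_mul,
          ← ENNReal.ofReal_rpow_of_pos ht, ← ENNReal.rpow_mul, mul_one_div_cancel hR.ne',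
          ENNReal.rpow_one, mul_comm]
        congr 2
        simp only [s]
        field_simp
    _ ≤ (ENNReal.ofReal R * ∫⁻ u in Ioi 0, distribution μ f u ^ s *
          ENNReal.ofReal (u ^ (R - 1))) ^ (1 / R) := by gcongr
    _ = _ := by
        rw [ENNReal.mul_rpow_of_nonneg _ _ (by positivity), lorentzNorm_eq_lintegral hr]

lemma exists_forall_mul_distribution_rpow_le (hr0 : r ≠ 0) (hf : lorentzNorm μ p r f ≠ ∞) :
    ∃ K ≠ ∞, ∀ t, 0 < t → ENNReal.ofReal t * distribution μ f t ^ (1 / p.toReal) ≤ K := by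
  by_cases hr : r = ∞
  · subst hr
    refine ⟨_, hf, fun t ht => ?_⟩
    rw [lorentzNorm, if_pos rfl]
    exact le_iSup₂ (f := fun t (_ : 0 < t) =>
      ENNReal.ofReal t * μ {x | t < ‖f x‖} ^ (1 / p.toReal)) t ht
  · exact ⟨_, mul_ne_top (ENNReal.rpow_ne_top_of_nonneg (by positivity) ofReal_ne_top) hf,
      fun t ht => mul_distribution_rpow_le_lorentzNorm hr0 hr ht⟩

lemma wSeq_top_dyadicLevel_le :
    wSeq 2 (1 / p.toReal) ∞ (fun j => ENNReal.ofReal (dyadicLevel μ f j)) ≤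
      2 * lorentzNorm μ p ∞ f := by
  rw [wSeq, if_pos rfl, lorentzNorm, if_pos rfl]
  refine iSup_le fun j => ?_
  rcases (dyadicLevel_nonneg (μ := μ) (f := f) j).eq_or_lt with h0 | hpos
  · simp [← h0]
  set t := dyadicLevel μ f j / 2
  have ht : 0 < t := half_pos hpos
  calc ENNReal.ofReal (2 ^ ((j : ℝ) * (1 / p.toReal))) * ENNReal.ofReal (dyadicLevel μ f j)
      = 2 * (ENNReal.ofReal t * (2 ^ (j : ℝ)) ^ (1 / p.toReal)) := by
        rw [← ENNReal.ofReal_rpow_of_pos two_pos, ofReal_ofNat, ← ENNReal.rpow_mul,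
          show dyadicLevel μ f j = 2 * t by ring, ENNReal.ofReal_mul zero_le_two, ofReal_ofNat]
        ring
    _ ≤ 2 * (ENNReal.ofReal t * distribution μ f t ^ (1 / p.toReal)) := by
        gcongr
        exact (lt_distribution_of_lt_dyadicLevel ht.le (half_lt_self hpos)).le
    _ ≤ 2 * ⨆ t : ℝ, ⨆ _ : 0 < t, ENNReal.ofReal t * μ {x | t < ‖f x‖} ^ (1 / p.toReal) := by
        gcongr
        exact le_iSup₂ (f := fun t (_ : 0 < t) =>
          ENNReal.ofReal t * μ {x | t < ‖f x‖} ^ (1 / p.toReal)) t ht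

lemma wSeq_dyadicLevel_le (hp : 0 < p.toReal) (hr0 : r ≠ 0) (hr : r ≠ ∞) :
    wSeq 2 (1 / p.toReal) r (fun j => ENNReal.ofReal (dyadicLevel μ f j)) ≤
      (ENNReal.ofReal r.toReal * (1 - 2 ^ (-(r.toReal / p.toReal)))⁻¹) ^ (1 / r.toReal) *
        lorentzNorm μ p r f := by
  set R := r.toReal
  set s := R / p.toReal
  have hR : 0 < R := toReal_pos hr0 hr
  have hs : 0 < s := div_pos hR hp
  rw [wSeq, if_neg hr, lorentzNorm_eq_lintegral hr,
    ← ENNReal.mul_rpow_of_nonneg _ _ (by positivity)]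
  gcongr
  calc ∑' j : ℤ, (ENNReal.ofReal (2 ^ ((j : ℝ) * (1 / p.toReal))) *
        ENNReal.ofReal (dyadicLevel μ f j)) ^ R
      = ∑' j : ℤ, 2 ^ ((j : ℝ) * s) * ENNReal.ofReal (dyadicLevel μ f j ^ R) := by
        refine tsum_congr fun j => ?_
        rw [ENNReal.mul_rpow_of_nonneg _ _ hR.le, ← ENNReal.ofReal_rpow_of_pos two_pos,
          ofReal_ofNat, ← ENNReal.rpow_mul,
          ENNReal.ofReal_rpow_of_nonneg (dyadicLevel_nonneg j) hR.le]
        congr 2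
        simp only [s]
        ring
    _ = ENNReal.ofReal R * ∫⁻ t in Ioi 0, (∑' j : ℤ, {j | t < dyadicLevel μ f j}.indicator
          (fun j => 2 ^ ((j : ℝ) * s)) j) * ENNReal.ofReal (t ^ (R - 1)) :=
        tsum_mul_ofReal_rpow_eq_lintegral _ (fun j => dyadicLevel_nonneg j) hR
    _ ≤ ENNReal.ofReal R * ∫⁻ t in Ioi 0, (1 - 2 ^ (-s))⁻¹ *
          (distribution μ f t ^ s * ENNReal.ofReal (t ^ (R - 1))) := by
        gcongr ENNReal.ofReal R * ?_
        refine setLIntegral_mono' measurableSet_Ioi fun t (ht : 0 < t) => ?_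
        rw [← mul_assoc]
        gcongr
        refine (ENNReal.tsum_le_tsum fun j => indicator_le_indicator_of_subset
          (fun j hj => lt_distribution_of_lt_dyadicLevel ht.le hj) (fun _ => bot_le) j).trans ?_
        exact tsum_indicator_two_rpow_lt_le hs _
    _ = ENNReal.ofReal R * (1 - 2 ^ (-s))⁻¹ *
          ∫⁻ t in Ioi 0, distribution μ f t ^ s * ENNReal.ofReal (t ^ (R - 1)) := by
        rw [lintegral_const_mul' _ _ (inv_one_sub_two_rpow_neg_ne_top hs), mul_assoc]

lemma exists_wSeq_dyadicLevel_le (hp : 0 < p.toReal) (hr0 : r ≠ 0) :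
    ∃ C ≠ ∞, ∀ f : X → ℂ,
      wSeq 2 (1 / p.toReal) r (fun j => ENNReal.ofReal (dyadicLevel μ f j)) ≤
        C * lorentzNorm μ p r f := by
  by_cases hr : r = ∞
  · subst hr
    exact ⟨2, ofNat_ne_top, fun f => wSeq_top_dyadicLevel_le⟩
  · refine ⟨_, ENNReal.rpow_ne_top_of_nonneg (by positivity) (mul_ne_top ofReal_ne_top
      (inv_one_sub_two_rpow_neg_ne_top (div_pos (toReal_pos hr0 hr) hp))),
      fun f => wSeq_dyadicLevel_le hp hr0 hr⟩

end Lorentz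

theorem statement10_general {X : Type*} [MeasurableSpace X] (μ : Measure X)
    (p : ℝ≥0∞) (hp1 : 1 < p) (hp2 : p ≠ ∞) (r : ℝ≥0∞) (hr : 1 ≤ r) :
    ∃ C₀ : ℝ≥0∞, C₀ ≠ ∞ ∧ ∀ f : X → ℂ, Measurable f → lorentzNorm μ p r f ≠ ∞ →
      ∃ F : ℤ → X → ℂ,
        (∀ j, Measurable (F j)) ∧
        (∀ x, HasSum (fun j => F j x) (f x)) ∧
        (∀ j k, j ≠ k → ∀ x, F j x * F k x = 0) ∧
        wSeq 2 (-(p.toReal - 1) / p.toReal) r (fun j => eLpNorm (F j) 1 μ) +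
            wSeq 2 (1 / p.toReal) r (fun j => eLpNorm (F j) ∞ μ) ≤
          C₀ * lorentzNorm μ p r f := by
  have hP : 0 < p.toReal := toReal_pos (zero_lt_one.trans hp1).ne' hp2
  have hr0 : r ≠ 0 := (zero_lt_one.trans_le hr).ne'
  obtain ⟨C, hC, hkey⟩ := exists_wSeq_dyadicLevel_le (μ := μ) hP hr0
  refine ⟨3 * C, mul_ne_top ofNat_ne_top hC, fun f hf hfin => ?_⟩
  obtain ⟨K, hK, hweak⟩ := exists_forall_mul_distribution_rpow_le hr0 hfin
  have hD := tendsto_distribution_of_forall_le hP hK hweak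
  obtain ⟨F, hFm, hsum, hdisj, hae⟩ := exists_hasSum_ae_eq_indicator hf
    (measurableSet_dyadicLayer hf.norm) (pairwise_disjoint_dyadicLayer hD)
    (measure_support_diff_iUnion_dyadicLayer_eq_zero hD
      fun _ => distribution_ne_top_of_forall_le hP hK hweak)
  refine ⟨F, hFm, hsum, fun j k hjk x => mul_eq_zero.2 (hdisj j k hjk x), ?_⟩
  set W := wSeq 2 (1 / p.toReal) r fun j => ENNReal.ofReal (dyadicLevel μ f j)
  have hL1 : wSeq 2 (-(p.toReal - 1) / p.toReal) r (fun j => eLpNorm (F j) 1 μ) ≤ 2 * W :=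
    wSeq_le_mul_wSeq hr0 fun j => by
      rw [eLpNorm_congr_ae (hae j)]
      exact two_rpow_mul_eLpNorm_one_indicator_dyadicLayer_le hD hP.ne' j
  have hLinf : wSeq 2 (1 / p.toReal) r (fun j => eLpNorm (F j) ∞ μ) ≤ 1 * W :=
    wSeq_le_mul_wSeq hr0 fun j => by
      rw [eLpNorm_congr_ae (hae j), one_mul]
      simpa using mul_le_mul_right (eLpNorm_indicator_dyadicLayer_le ∞ j) _
  calc _ ≤ 2 * W + 1 * W := add_le_add hL1 hLinf
    _ = 3 * W := by ring
    _ ≤ 3 * (C * lorentzNorm μ p r f) := by gcongr; exact hkey f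
    _ = 3 * C * lorentzNorm μ p r f := (mul_assoc _ _ _).symm

/-- Lemma 1 of the paper: on a sigma-finite measure space, every
`f ∈ L^{p,r}` decomposes as `f = ∑_{j∈ℤ} f_j` with disjointly supported measurable pieces
satisfying `‖(2^{-j(p-1)/p} ‖f_j‖_{L¹})_j‖_{ℓʳ} + ‖(2^{j/p} ‖f_j‖_{L^∞})_j‖_{ℓʳ} ≤ C₀ ‖f‖_{L^{p,r}}`. -/
theorem statement10 {X : Type*} [MeasurableSpace X] (μ : Measure X) [SigmaFinite μ]
    (p : ℝ≥0∞) (hp1 : 1 < p) (hp2 : p ≠ ∞) (r : ℝ≥0∞) (hr : 1 ≤ r) :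
    ∃ C₀ : ℝ≥0∞, C₀ ≠ ∞ ∧ ∀ f : X → ℂ, Measurable f → lorentzNorm μ p r f ≠ ∞ →
      ∃ F : ℤ → X → ℂ,
        (∀ j, Measurable (F j)) ∧
        (∀ x, HasSum (fun j => F j x) (f x)) ∧
        (∀ j k, j ≠ k → ∀ x, F j x * F k x = 0) ∧
        wSeq 2 (-(p.toReal - 1) / p.toReal) r (fun j => eLpNorm (F j) 1 μ) +
            wSeq 2 (1 / p.toReal) r (fun j => eLpNorm (F j) ∞ μ) ≤
          C₀ * lorentzNorm μ p r f :=
  statement10_general μ p hp1 hp2 r hr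
end

section
/- Let n ≥ 1, α, β > 0, q₀, q₁ ∈ [1, ∞] with q₀ ≠ q₁, θ = α/(α+β) ∈ (0,1), 1/p = (1-θ)/q₀ + θ/q₁, and let r, r₀, r₁ ∈ [1, ∞]. Suppose there exists a constant C such that for every sequence (g_j)_{j∈ℤ} of measurable functions on ℝⁿ and every measurable f such that Σ_{j∈ℤ} g_j(x) converges absolutely to f(x) for a.e. x, one has ‖f‖_{L^{p,r}} ≤ C · ( Σ_{j∈ℤ} (2^{jα}‖g_j‖_{L^{q₀}})^{r₀} )^{(1-θ)/r₀} · ( Σ_{j∈ℤ} (2^{-jβ}‖g_j‖_{L^{q₁}})^{r₁} )^{θ/r₁} (with sup modifications for infinite exponents). Then necessarily 1/r ≤ (1-θ)/r₀ + θ/r₁. -/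
/-!
Test the inequality on the Bahouri–Cohen example `f_L = ∑_{j=1}^{L} 2^{jd} 1_{E_j}`, with disjoint
sets `|E_j| = 2^{-jc}` and exponents `c, d` chosen so that every block has weighted size exactly `1`
in both Besov norms and `2^{jd} |E_j|^{1/p} = 1`. The Besov norms are then `L^{1/r₀}` and
`L^{1/r₁}`, so the right-hand side is `C L^{(1-θ)/r₀ + θ/r₁}`. The heights `2^{jd}` are lacunary,
so the Lorentz integral collects a fixed amount from each of the disjoint windows
`t ∈ (2^{-|d|} 2^{jd}, 2^{jd})`, on which `|{|f_L| > t}| ≥ |E_j|`; hence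
`‖f_L‖_{L^{p,r}} ≳ L^{1/r}`, and letting `L → ∞` gives `1/r ≤ (1-θ)/r₀ + θ/r₁`.
-/

open MeasureTheory ENNReal

open Set Filter Topology Function

lemma wSeq_eq_card_rpow {ρ σ : ℝ} {r : ℝ≥0∞} {a : ℤ → ℝ≥0∞} {s : Finset ℤ} (hs : s.Nonempty)
    (hr : r ≠ 0) (h₁ : ∀ j ∈ s, ENNReal.ofReal (ρ ^ ((j : ℝ) * σ)) * a j = 1)
    (h₀ : ∀ j ∉ s, a j = 0) :
    wSeq ρ σ r a = (s.card : ℝ≥0∞) ^ (r⁻¹).toReal := by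
  have hterm : ∀ j : ℤ, ENNReal.ofReal (ρ ^ ((j : ℝ) * σ)) * a j = if j ∈ s then 1 else 0 := by
    intro j
    split_ifs with hj
    · exact h₁ j hj
    · rw [h₀ j hj, mul_zero]
  unfold wSeq
  split_ifs with hr_top
  · simp only [hterm, hr_top, ENNReal.inv_top, ENNReal.toReal_zero, ENNReal.rpow_zero]
    obtain ⟨j, hj⟩ := hs
    refine le_antisymm (iSup_le fun k => ?_) (le_iSup_of_le j (by simp [hj]))
    split_ifs <;> simp
  · have hr_pos : 0 < r.toReal := ENNReal.toReal_pos hr hr_top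
    have hpow : ∀ j : ℤ, (if j ∈ s then (1 : ℝ≥0∞) else 0) ^ r.toReal = if j ∈ s then 1 else 0 := by
      intro j
      split_ifs
      exacts [ENNReal.one_rpow _, ENNReal.zero_rpow_of_pos hr_pos]
    simp only [hterm, hpow]
    rw [tsum_eq_sum (s := s) (by simp +contextual), Finset.sum_boole, Finset.filter_mem_eq_inter,
      Finset.inter_self, one_div, ENNReal.toReal_inv]

lemma toReal_ofReal_mul_add_ofReal_mul {s t : ℝ} {x y : ℝ≥0∞} (hs : 0 ≤ s) (ht : 0 ≤ t)
    (hx : x ≠ ∞) (hy : y ≠ ∞) :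
    (ENNReal.ofReal s * x + ENNReal.ofReal t * y).toReal = s * x.toReal + t * y.toReal := by
  rw [ENNReal.toReal_add (by finiteness) (by finiteness), ENNReal.toReal_mul, ENNReal.toReal_mul,
    ENNReal.toReal_ofReal hs, ENNReal.toReal_ofReal ht]

lemma le_of_forall_mul_natCast_rpow_le {ε C : ℝ≥0∞} {a b : ℝ} (hε : ε ≠ 0) (hC : C ≠ ∞)
    (h : ∀ L : ℕ, 0 < L → ε * (L : ℝ≥0∞) ^ a ≤ C * (L : ℝ≥0∞) ^ b) : a ≤ b := by
  by_contra! hba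
  have hbound : ∀ L : ℕ, 0 < L → ε * (L : ℝ≥0∞) ^ (a - b) ≤ C := by
    intro L hL
    have hL₀ : (L : ℝ≥0∞) ≠ 0 := by positivity
    have hL_top : (L : ℝ≥0∞) ≠ ∞ := ENNReal.natCast_ne_top L
    rw [← ENNReal.mul_le_mul_iff_left (c := (L : ℝ≥0∞) ^ b) (by positivity)
      (ENNReal.rpow_ne_top_of_ne_zero hL₀ hL_top), mul_assoc, ← ENNReal.rpow_add _ _ hL₀ hL_top,
      sub_add_cancel]
    exact h L hL
  have hlim : Tendsto (fun L : ℕ => ε * (L : ℝ≥0∞) ^ (a - b)) atTop (𝓝 ∞) := by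
    have hpow := ((ENNReal.continuous_rpow_const (y := a - b)).tendsto ∞).comp
      ENNReal.tendsto_nat_nhds_top
    rw [ENNReal.top_rpow_of_pos (sub_pos.2 hba)] at hpow
    simpa [ENNReal.mul_top hε] using ENNReal.Tendsto.const_mul (a := ε) hpow (Or.inl top_ne_zero)
  obtain ⟨L, hL, hCL⟩ :=
    ((hlim.eventually (lt_mem_nhds hC.lt_top)).and (eventually_gt_atTop 0)).exists
  exact (hbound L hCL).not_gt hL

lemma exists_scaling_exponents {α β θ u₀ u₁ : ℝ} (hα : 0 < α) (hβ : 0 < β)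
    (hθ : θ = α / (α + β)) (hu₀ : 0 ≤ u₀) (hu₁ : 0 ≤ u₁) (hu : u₀ ≠ u₁) :
    ∃ c d : ℝ, d ≠ 0 ∧ α + d - c * u₀ = 0 ∧ -β + d - c * u₁ = 0 ∧
      d - c * ((1 - θ) * u₀ + θ * u₁) = 0 := by
  have hδ : u₀ - u₁ ≠ 0 := sub_ne_zero.2 hu
  have hnum : 0 < α * u₁ + β * u₀ := by
    rcases hu₁.eq_or_lt with rfl | hu₁
    · have : 0 < u₀ := hu₀.lt_of_ne hu.symm
      positivity
    · positivity
  refine ⟨(α + β) / (u₀ - u₁), (α * u₁ + β * u₀) / (u₀ - u₁), div_ne_zero hnum.ne' hδ, ?_, ?_, ?_⟩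
  · field_simp; ring
  · field_simp; ring
  · subst hθ; field_simp; ring

section Slab

variable {n : ℕ} (i : Fin n)

def slab (I : Set ℝ) : Set (Fin n → ℝ) :=
  univ.pi (Function.update (fun _ => Ioo 0 1) i I)

variable {i}

lemma measurableSet_slab {I : Set ℝ} (hI : MeasurableSet I) : MeasurableSet (slab i I) := by
  refine MeasurableSet.univ_pi fun k => ?_
  rcases eq_or_ne k i with rfl | hk
  · simpa using hI
  · simp [hk, measurableSet_Ioo]

lemma volume_slab (I : Set ℝ) : volume (slab i I) = volume I := by
  rw [slab, volume_pi_pi,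
    Finset.prod_eq_single i (fun k _ hk => by simp [hk, Real.volume_Ioo]) (by simp)]
  simp

lemma disjoint_slab {I J : Set ℝ} (h : Disjoint I J) : Disjoint (slab i I) (slab i J) :=
  Set.disjoint_left.2 fun _ hxI hxJ =>
    h.notMem_of_mem_left (by simpa using hxI i (mem_univ _)) (by simpa using hxJ i (mem_univ _))

end Slab

lemma ofReal_le_setLIntegral_Ioo {φ : ℝ → ℝ≥0∞} {u ρ lam a m : ℝ} (hu : 0 ≤ u) (hρ : 0 < ρ)
    (hlam : 0 ≤ lam) (ha : 0 < a) (hm : 0 < m) (ham : a * m ^ u = 1)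
    (hφ : ∀ t < a, ENNReal.ofReal m ≤ φ t) :
    ENNReal.ofReal (lam ^ ρ * (1 - lam)) ≤
      ∫⁻ t in Ioo (lam * a) a, (ENNReal.ofReal t * φ t ^ u) ^ ρ / ENNReal.ofReal t := by
  have hbound : ∀ t ∈ Ioo (lam * a) a,
      ENNReal.ofReal (lam ^ ρ / a) ≤ (ENNReal.ofReal t * φ t ^ u) ^ ρ / ENNReal.ofReal t := by
    intro t ht
    have hlow : ENNReal.ofReal (lam ^ ρ / a) =
        (ENNReal.ofReal (lam * a) * ENNReal.ofReal m ^ u) ^ ρ / ENNReal.ofReal a := by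
      rw [ENNReal.ofReal_rpow_of_pos hm, ← ENNReal.ofReal_mul (by positivity),
        ENNReal.ofReal_rpow_of_nonneg (by positivity) hρ.le, ← ENNReal.ofReal_div_of_pos ha,
        mul_assoc, ham, mul_one]
    rw [hlow]
    gcongr
    · exact ht.1.le
    · exact hφ t ht.2
    · exact ht.2.le
  calc ENNReal.ofReal (lam ^ ρ * (1 - lam))
      = ENNReal.ofReal (lam ^ ρ / a) * volume (Ioo (lam * a) a) := by
        rw [Real.volume_Ioo, ← ENNReal.ofReal_mul (by positivity)]
        congr 1
        field_simp
    _ ≤ _ := by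
        rw [← setLIntegral_const]
        exact setLIntegral_mono' measurableSet_Ioo hbound

lemma ofReal_mul_card_le_lintegral_Ioi {ι : Type*} {s : Finset ι} {φ : ℝ → ℝ≥0∞}
    {u ρ lam : ℝ} {a m : ι → ℝ} (hu : 0 ≤ u) (hρ : 0 < ρ) (hlam : 0 ≤ lam)
    (ha : ∀ j ∈ s, 0 < a j) (hm : ∀ j ∈ s, 0 < m j) (ham : ∀ j ∈ s, a j * m j ^ u = 1)
    (hφ : ∀ j ∈ s, ∀ t < a j, ENNReal.ofReal (m j) ≤ φ t)
    (hdisj : (s : Set ι).PairwiseDisjoint fun j => Ioo (lam * a j) (a j)) :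
    ENNReal.ofReal (lam ^ ρ * (1 - lam)) * s.card ≤
      ∫⁻ t in Ioi 0, (ENNReal.ofReal t * φ t ^ u) ^ ρ / ENNReal.ofReal t := by
  have hsub : (⋃ j ∈ s, Ioo (lam * a j) (a j)) ⊆ Ioi 0 := by
    simp only [iUnion_subset_iff]
    exact fun j hj t ht => lt_of_le_of_lt (by have := ha j hj; positivity) ht.1
  calc ENNReal.ofReal (lam ^ ρ * (1 - lam)) * s.card
      = ∑ j ∈ s, ENNReal.ofReal (lam ^ ρ * (1 - lam)) := by
        rw [Finset.sum_const, nsmul_eq_mul, mul_comm]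
    _ ≤ ∑ j ∈ s, ∫⁻ t in Ioo (lam * a j) (a j),
          (ENNReal.ofReal t * φ t ^ u) ^ ρ / ENNReal.ofReal t :=
        Finset.sum_le_sum fun j hj =>
          ofReal_le_setLIntegral_Ioo hu hρ hlam (ha j hj) (hm j hj) (ham j hj) (hφ j hj)
    _ = ∫⁻ t in ⋃ j ∈ s, Ioo (lam * a j) (a j),
          (ENNReal.ofReal t * φ t ^ u) ^ ρ / ENNReal.ofReal t :=
        (lintegral_biUnion_finset hdisj (fun _ _ => measurableSet_Ioo) _).symm
    _ ≤ _ := lintegral_mono_set hsub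

lemma pairwise_disjoint_Ioo_two_rpow (d : ℝ) :
    Pairwise (Disjoint on fun j : ℤ =>
      Ioo ((2 : ℝ) ^ (-|d|) * 2 ^ ((j : ℝ) * d)) (2 ^ ((j : ℝ) * d))) := by
  have key : ∀ j k : ℤ, j ≠ k → (j : ℝ) * d ≤ k * d →
      Disjoint (Ioo ((2 : ℝ) ^ (-|d|) * 2 ^ ((j : ℝ) * d)) (2 ^ ((j : ℝ) * d)))
        (Ioo (2 ^ (-|d|) * 2 ^ ((k : ℝ) * d)) (2 ^ ((k : ℝ) * d))) := by
    intro j k hjk hle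
    have hgap : |d| ≤ k * d - j * d :=
      calc |d| ≤ |((k - j : ℤ) : ℝ)| * |d| :=
            le_mul_of_one_le_left (abs_nonneg d) (by
              exact_mod_cast Int.one_le_abs (sub_ne_zero.2 hjk.symm))
        _ = k * d - j * d := by
          rw [← abs_mul, Int.cast_sub, sub_mul, abs_of_nonneg (sub_nonneg.2 hle)]
    refine Set.disjoint_left.2 fun t htj htk => htj.2.not_ge (le_trans ?_ htk.1.le)
    rw [← Real.rpow_add two_pos, Real.rpow_le_rpow_left_iff one_lt_two]
    linarith
  intro j k hjk
  rcases le_total ((j : ℝ) * d) (k * d) with h | h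
  · exact key j k hjk h
  · exact (key k j hjk.symm h).symm

section TestFunction

variable {n : ℕ} (i : Fin n) (c d : ℝ) (L : ℕ)

/-- The spacing `2^{|c|L}` bounds the widths `2^{-jc}`, `1 ≤ j ≤ L`, so these sets are disjoint. -/
noncomputable def testSet (j : ℤ) : Set (Fin n → ℝ) :=
  slab i (Ioo (j * 2 ^ (|c| * L)) (j * 2 ^ (|c| * L) + 2 ^ (-(j * c))))

noncomputable def testFamily (j : ℤ) : (Fin n → ℝ) → ℂ :=
  if j ∈ Finset.Icc (1 : ℤ) L then
    (testSet i c L j).indicator fun _ => ((2 ^ ((j : ℝ) * d) : ℝ) : ℂ)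
  else 0

noncomputable def testFunction (x : Fin n → ℝ) : ℂ :=
  ∑ j ∈ Finset.Icc (1 : ℤ) L, testFamily i c d L j x

variable {i c d L}

lemma measurableSet_testSet (j : ℤ) : MeasurableSet (testSet i c L j) :=
  measurableSet_slab measurableSet_Ioo

lemma volume_testSet (j : ℤ) :
    volume (testSet i c L j) = ENNReal.ofReal (2 ^ (-((j : ℝ) * c))) := by
  rw [testSet, volume_slab, Real.volume_Ioo, add_sub_cancel_left]

lemma pairwiseDisjoint_testSet :
    (Finset.Icc (1 : ℤ) L : Set ℤ).PairwiseDisjoint (testSet i c L) := by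
  have key : ∀ j ∈ Finset.Icc (1 : ℤ) L, ∀ k : ℤ, j < k →
      Disjoint (testSet i c L j) (testSet i c L k) := by
    intro j hj k hjk
    rw [Finset.mem_Icc] at hj
    have hwidth : (2 : ℝ) ^ (-((j : ℝ) * c)) ≤ 2 ^ (|c| * L) := by
      rw [Real.rpow_le_rpow_left_iff one_lt_two]
      have hj₁ : (1 : ℝ) ≤ j := by exact_mod_cast hj.1
      have hjL : (j : ℝ) ≤ L := by exact_mod_cast hj.2
      calc -((j : ℝ) * c) ≤ |j * c| := neg_le_abs _
        _ = j * |c| := by rw [abs_mul, abs_of_pos (by linarith)]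
        _ ≤ |c| * L := by nlinarith [abs_nonneg c]
    have hjk' : (j : ℝ) + 1 ≤ k := by exact_mod_cast hjk
    refine disjoint_slab (Set.Ioo_disjoint_Ioo.2 (min_le_of_left_le (le_max_of_le_right ?_)))
    nlinarith [Real.rpow_pos_of_pos two_pos (|c| * L)]
  intro j hj k hk hjk
  rcases hjk.lt_or_gt with h | h
  · exact key j hj k h
  · exact (key k hk j h).symm

lemma testFamily_of_notMem {j : ℤ} (hj : j ∉ Finset.Icc (1 : ℤ) L) : testFamily i c d L j = 0 :=
  if_neg hj

lemma measurable_testFamily (j : ℤ) : Measurable (testFamily i c d L j) := by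
  unfold testFamily
  split_ifs
  exacts [measurable_const.indicator (measurableSet_testSet j), measurable_const]

lemma measurable_testFunction : Measurable (testFunction i c d L) :=
  Finset.measurable_sum _ fun j _ => measurable_testFamily j

lemma summable_norm_and_hasSum_testFamily (x : Fin n → ℝ) :
    (Summable fun j => ‖testFamily i c d L j x‖) ∧
      HasSum (fun j => testFamily i c d L j x) (testFunction i c d L x) := by
  have h₀ : ∀ j ∉ Finset.Icc (1 : ℤ) L, testFamily i c d L j x = 0 := fun j hj => by
    rw [testFamily_of_notMem hj, Pi.zero_apply]
  exact ⟨summable_of_ne_finset_zero fun j hj => by rw [h₀ j hj, norm_zero],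
    hasSum_sum_of_ne_finset_zero h₀⟩

lemma testFunction_eq_of_mem {j : ℤ} (hj : j ∈ Finset.Icc (1 : ℤ) L) {x : Fin n → ℝ}
    (hx : x ∈ testSet i c L j) : testFunction i c d L x = ((2 ^ ((j : ℝ) * d) : ℝ) : ℂ) := by
  have hfamily : ∀ k ∈ Finset.Icc (1 : ℤ) L, testFamily i c d L k x =
      if k = j then ((2 ^ ((j : ℝ) * d) : ℝ) : ℂ) else 0 := by
    intro k hk
    simp only [testFamily, if_pos hk]
    split_ifs with hkj
    · subst hkj
      exact indicator_of_mem hx _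
    · exact indicator_of_notMem
        (Set.disjoint_right.1 (pairwiseDisjoint_testSet hk hj hkj) hx) _
  rw [testFunction, Finset.sum_congr rfl hfamily, Finset.sum_ite_eq', if_pos hj]

lemma eLpNorm_testFamily {q : ℝ≥0∞} (hq : q ≠ 0) {j : ℤ} (hj : j ∈ Finset.Icc (1 : ℤ) L) :
    eLpNorm (testFamily i c d L j) q volume =
      ENNReal.ofReal (2 ^ ((j : ℝ) * (d - c * (q⁻¹).toReal))) := by
  rw [testFamily, if_pos hj, eLpNorm_indicator_const' (measurableSet_testSet j)
    (by rw [volume_testSet]; positivity) hq, volume_testSet, ← ofReal_norm,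
    Complex.norm_real, Real.norm_of_nonneg (by positivity), one_div, ← ENNReal.toReal_inv,
    ENNReal.ofReal_rpow_of_pos (by positivity), ← ENNReal.ofReal_mul (by positivity),
    ← Real.rpow_mul zero_le_two, ← Real.rpow_add two_pos]
  ring_nf

lemma besovNorm_testFamily (hL : 0 < L) {s : ℝ} {q r : ℝ≥0∞} (hq : q ≠ 0) (hr : r ≠ 0)
    (hs : s + d - c * (q⁻¹).toReal = 0) :
    besovNorm volume s q r (testFamily i c d L) = (L : ℝ≥0∞) ^ (r⁻¹).toReal := by
  have hone : (1 : ℤ) ∈ Finset.Icc (1 : ℤ) L := Finset.mem_Icc.2 ⟨le_rfl, by exact_mod_cast hL⟩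
  rw [besovNorm, wSeq_eq_card_rpow ⟨1, hone⟩ hr, Int.card_Icc]
  · simp
  · intro j hj
    rw [eLpNorm_testFamily hq hj, ← ENNReal.ofReal_mul (by positivity), ← Real.rpow_add two_pos,
      ← mul_add, show s + (d - c * (q⁻¹).toReal) = 0 by linarith, mul_zero, Real.rpow_zero,
      ENNReal.ofReal_one]
  · intro j hj
    rw [testFamily_of_notMem hj, eLpNorm_zero]

lemma exists_le_lorentzNorm_testFunction (hd : d ≠ 0) {p r : ℝ≥0∞}
    (hdp : d - c * (p⁻¹).toReal = 0) (hr : r ≠ 0) (hr_top : r ≠ ∞) :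
    ∃ ε : ℝ≥0∞, ε ≠ 0 ∧ ∀ L : ℕ,
      ε * (L : ℝ≥0∞) ^ (r⁻¹).toReal ≤ lorentzNorm volume p r (testFunction i c d L) := by
  set lam : ℝ := 2 ^ (-|d|)
  have hlam₀ : 0 ≤ lam := by positivity
  have hlam₁ : lam < 1 := Real.rpow_lt_one_of_one_lt_of_neg one_lt_two (by simpa using hd)
  have hε : ENNReal.ofReal (lam ^ r.toReal * (1 - lam)) ≠ 0 := by
    have : 0 < lam := by positivity
    have : 0 < 1 - lam := by linarith
    positivity
  refine ⟨ENNReal.ofReal (lam ^ r.toReal * (1 - lam)) ^ (r⁻¹).toReal,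
    (ENNReal.rpow_pos (pos_iff_ne_zero.2 hε) ENNReal.ofReal_ne_top).ne', fun L => ?_⟩
  rw [lorentzNorm, if_neg hr_top, ← ENNReal.mul_rpow_of_nonneg _ _ ENNReal.toReal_nonneg,
    one_div r.toReal, one_div p.toReal, ← ENNReal.toReal_inv, ← ENNReal.toReal_inv]
  gcongr
  have hcard : ((Finset.Icc (1 : ℤ) L).card : ℝ≥0∞) = L := by simp
  rw [← hcard]
  refine ofReal_mul_card_le_lintegral_Ioi (a := fun j : ℤ => 2 ^ ((j : ℝ) * d))
    (m := fun j : ℤ => 2 ^ (-((j : ℝ) * c))) ENNReal.toReal_nonneg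
    (ENNReal.toReal_pos hr hr_top) hlam₀ (fun _ _ => by positivity) (fun _ _ => by positivity)
    (fun j _ => ?_) (fun j hj t ht => ?_) ((pairwise_disjoint_Ioo_two_rpow d).set_pairwise _)
  · rw [← Real.rpow_mul zero_le_two, ← Real.rpow_add two_pos,
      show (j : ℝ) * d + -(j * c) * (p⁻¹).toReal = j * (d - c * (p⁻¹).toReal) by ring, hdp,
      mul_zero, Real.rpow_zero]
  · rw [← volume_testSet (i := i)]
    refine measure_mono fun x hx => ?_
    rw [mem_ofPred_eq, testFunction_eq_of_mem hj hx, Complex.norm_real,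
      Real.norm_of_nonneg (by positivity)]
    exact ht

end TestFunction

/-- sharpness (part 3) of Theorem 3 / optimality after Theorem 5): if the
refined inequality
`‖f‖_{L^{p,r}} ≤ C ‖f‖_{Ḃ^{α,q₀}_{r₀}}^{1-θ} ‖f‖_{Ḃ^{-β,q₁}_{r₁}}^θ`
holds (with a finite constant `C`) for every a.e. absolutely convergent decomposition
`f = ∑_{j∈ℤ} g_j` on `ℝⁿ`, then necessarily `1/r ≤ (1-θ)/r₀ + θ/r₁`. -/
theorem statement16 (n : ℕ) (hn : 1 ≤ n) (α β : ℝ) (hα : 0 < α) (hβ : 0 < β)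
    (q₀ q₁ : ℝ≥0∞) (hq₀ : 1 ≤ q₀) (hq₁ : 1 ≤ q₁) (hq : q₀ ≠ q₁)
    (θ : ℝ) (hθ : θ = α / (α + β))
    (p : ℝ≥0∞) (hp : p⁻¹ = ENNReal.ofReal (1 - θ) * q₀⁻¹ + ENNReal.ofReal θ * q₁⁻¹)
    (r r₀ r₁ : ℝ≥0∞) (hr : 1 ≤ r) (hr₀ : 1 ≤ r₀) (hr₁ : 1 ≤ r₁)
    (C : ℝ≥0∞) (hC : C ≠ ∞)
    (H : ∀ (g : ℤ → (Fin n → ℝ) → ℂ) (f : (Fin n → ℝ) → ℂ),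
      (∀ j, Measurable (g j)) → Measurable f →
      (∀ᵐ x ∂(volume : Measure (Fin n → ℝ)),
        (Summable fun j => ‖g j x‖) ∧ HasSum (fun j => g j x) (f x)) →
      lorentzNorm volume p r f ≤
        C * besovNorm volume α q₀ r₀ g ^ (1 - θ) * besovNorm volume (-β) q₁ r₁ g ^ θ) :
    r⁻¹ ≤ ENNReal.ofReal (1 - θ) * r₀⁻¹ + ENNReal.ofReal θ * r₁⁻¹ := by
  by_cases hr_top : r = ∞
  · simp [hr_top]
  have hθ₀ : 0 ≤ θ := hθ ▸ by positivity
  have hθ₁ : 0 ≤ 1 - θ := by rw [hθ, sub_nonneg, div_le_one (by linarith)]; linarith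
  have hq₀' : q₀ ≠ 0 := (zero_lt_one.trans_le hq₀).ne'
  have hq₁' : q₁ ≠ 0 := (zero_lt_one.trans_le hq₁).ne'
  have hr' : r ≠ 0 := (zero_lt_one.trans_le hr).ne'
  have hu : (q₀⁻¹).toReal ≠ (q₁⁻¹).toReal := fun h => hq <| inv_injective <|
    (ENNReal.toReal_eq_toReal_iff' (ENNReal.inv_ne_top.2 hq₀') (ENNReal.inv_ne_top.2 hq₁')).1 h
  obtain ⟨c, d, hd, hcd₀, hcd₁, hcdp⟩ :=
    exists_scaling_exponents hα hβ hθ ENNReal.toReal_nonneg ENNReal.toReal_nonneg hu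
  obtain ⟨ε, hε, hlorentz⟩ := exists_le_lorentzNorm_testFunction (i := ⟨0, hn⟩) hd
    (by rwa [hp, toReal_ofReal_mul_add_ofReal_mul hθ₁ hθ₀ (by finiteness) (by finiteness)])
    hr' hr_top
  rw [← ENNReal.toReal_le_toReal (ENNReal.inv_ne_top.2 hr') (by finiteness),
    toReal_ofReal_mul_add_ofReal_mul hθ₁ hθ₀ (by finiteness) (by finiteness)]
  refine le_of_forall_mul_natCast_rpow_le hε hC fun L hL => ?_
  calc ε * (L : ℝ≥0∞) ^ (r⁻¹).toReal
      ≤ lorentzNorm volume p r (testFunction ⟨0, hn⟩ c d L) := hlorentz L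
    _ ≤ C * besovNorm volume α q₀ r₀ (testFamily ⟨0, hn⟩ c d L) ^ (1 - θ) *
          besovNorm volume (-β) q₁ r₁ (testFamily ⟨0, hn⟩ c d L) ^ θ :=
        H _ _ measurable_testFamily measurable_testFunction
          (ae_of_all _ summable_norm_and_hasSum_testFamily)
    _ = C * (L : ℝ≥0∞) ^ ((1 - θ) * (r₀⁻¹).toReal + θ * (r₁⁻¹).toReal) := by
      rw [besovNorm_testFamily hL hq₀' (zero_lt_one.trans_le hr₀).ne' (by linarith),
        besovNorm_testFamily hL hq₁' (zero_lt_one.trans_le hr₁).ne' (by linarith),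
        ← ENNReal.rpow_mul, ← ENNReal.rpow_mul, mul_assoc,
        ← ENNReal.rpow_add _ _ (by positivity) (ENNReal.natCast_ne_top L), mul_comm _ (1 - θ),
        mul_comm _ θ]
end
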